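/- Scalar Neumann-type expansion for the pseudo-kernel: for quaternions s, p with |p| < |s|, the quaternion-valued function (s̄B - Bp)(p² - 2Re(s)p + |s|²)⁻¹ equals Σ_{m≥0} s^{-1-m} B pᵐ for every quaternion B; in particular taking B = 1, (s̄ - p)(p² - 2Re(s)p + |s|²)⁻¹ = Σ_{m≥0} s^{-1-m} pᵐ, the slice-hyperholomorphic Cauchy kernel expansion. -/

import Mathlib

/-!
The series `T = Σ s^{-1-m} B pᵐ` converges geometrically since `|p| < |s|`, and shifting its index
gives the Sylvester equation `s T - T p = B`. As `s` is a root of the real quadratic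
`x² - 2Re(s)x + |s|²`, this equation turns `T (p² - 2Re(s)p + |s|²)` into `s̄B - Bp`. For `B = 1`
it shows that `p² - 2Re(s)p + |s|²` is invertible, since otherwise `p = s̄` would have norm `|s|`.
-/

open scoped Quaternion

theorem mul_quadratic_eq_of_mul_sub_mul_eq {R A : Type*} [CommRing R] [Ring A] [Algebra R A]
    {s p T B : A} {a b : R} (hs : s ^ 2 - a • s + algebraMap R A b = 0)
    (hT : s * T - T * p = B) :
    T * (p ^ 2 - a • p + algebraMap R A b) = (algebraMap R A a - s) * B - B * p := by
  rw [← sub_eq_zero, ← zero_mul T, ← hs, ← hT]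
  simp only [Algebra.smul_def, sq, mul_sub, sub_mul, mul_add, add_mul, mul_assoc,
    Algebra.commutes]
  noncomm_ring

theorem summable_inv_pow_succ_mul_mul_pow {𝕜 : Type*} [NormedDivisionRing 𝕜]
    [CompleteSpace 𝕜] {s p : 𝕜} (h : ‖p‖ < ‖s‖) (B : 𝕜) :
    Summable fun m : ℕ => s⁻¹ ^ (m + 1) * B * p ^ m := by
  have hs : 0 < ‖s‖ := (norm_nonneg p).trans_lt h
  have hratio : ‖p‖ * ‖s‖⁻¹ < 1 := by rwa [← div_eq_mul_inv, div_lt_one hs]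
  refine Summable.of_norm_bounded
    ((summable_geometric_of_lt_one (by positivity) hratio).mul_left (‖s‖⁻¹ * ‖B‖)) fun m => ?_
  simp only [norm_mul, norm_pow, norm_inv, mul_pow]
  exact (by ring : _ = _).le

theorem HasSum.mul_sub_mul_eq_of_inv_pow {𝕜 : Type*} [DivisionRing 𝕜] [TopologicalSpace 𝕜]
    [IsTopologicalRing 𝕜] [T2Space 𝕜] {s p B T : 𝕜} (hs : s ≠ 0)
    (hT : HasSum (fun m : ℕ => s⁻¹ ^ (m + 1) * B * p ^ m) T) :
    s * T - T * p = B := by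
  have hcancel (m : ℕ) : s * s⁻¹ ^ (m + 1) = s⁻¹ ^ m := by
    rw [pow_succ', ← mul_assoc, mul_inv_cancel₀ hs, one_mul]
  have hleft : HasSum (fun m : ℕ => s⁻¹ ^ m * B * p ^ m) (s * T) := by
    simpa only [← mul_assoc, hcancel] using hT.mul_left s
  have hright : HasSum (fun m : ℕ => s⁻¹ ^ (m + 1) * B * p ^ (m + 1)) (T * p) := by
    simpa only [mul_assoc, ← pow_succ] using hT.mul_right p
  have hshift : s * T - B = T * p := by
    simpa using ((hasSum_nat_add_iff' 1).mpr hleft).unique hright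
  rw [← hshift, sub_sub_cancel]

namespace Quaternion

theorem sq_sub_two_re_smul_add_norm_sq (s : ℍ[ℝ]) :
    s ^ 2 - (2 * s.re) • s + ((‖s‖ ^ 2 : ℝ) : ℍ[ℝ]) = 0 := by
  rw [sq ‖s‖, ← normSq_eq_norm_mul_self, ← star_mul_self, ← coe_mul_eq_smul,
    ← self_add_star']
  noncomm_ring

theorem mul_sq_sub_two_re_smul_add_norm_sq_eq {s p B T : ℍ[ℝ]} (hs : s ≠ 0)
    (hT : HasSum (fun m : ℕ => s⁻¹ ^ (m + 1) * B * p ^ m) T) :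
    T * (p ^ 2 - (2 * s.re) • p + ((‖s‖ ^ 2 : ℝ) : ℍ[ℝ])) = star s * B - B * p := by
  have hstar : star s = ((2 * s.re : ℝ) : ℍ[ℝ]) - s := by
    rw [← self_add_star', add_sub_cancel_left]
  rw [hstar]
  exact mul_quadratic_eq_of_mul_sub_mul_eq (sq_sub_two_re_smul_add_norm_sq s)
    (hT.mul_sub_mul_eq_of_inv_pow hs)

theorem sq_sub_two_re_smul_add_norm_sq_ne_zero {s p : ℍ[ℝ]} (h : ‖p‖ < ‖s‖) :
    p ^ 2 - (2 * s.re) • p + ((‖s‖ ^ 2 : ℝ) : ℍ[ℝ]) ≠ 0 := by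
  intro hQ
  have hs : s ≠ 0 := norm_pos_iff.mp ((norm_nonneg p).trans_lt h)
  obtain ⟨T, hT⟩ := summable_inv_pow_succ_mul_mul_pow h 1
  have hTQ := mul_sq_sub_two_re_smul_add_norm_sq_eq hs hT
  rw [hQ, mul_zero, mul_one, one_mul, eq_comm, sub_eq_zero] at hTQ
  rw [← hTQ, norm_star] at h
  exact h.false

end Quaternion

/-- Scalar Neumann-type expansion for the pseudo-kernel: for `|p| < |s|` and any
quaternion `B`, `(s̄B - Bp)(p² - 2Re(s)p + |s|²)⁻¹ = Σ_{m≥0} s^{-1-m} B pᵐ`;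
in particular, with `B = 1`, `(s̄ - p)(p² - 2Re(s)p + |s|²)⁻¹ = Σ_{m≥0} s^{-1-m} pᵐ`. -/
theorem pseudo_kernel_series_expansion (s p : ℍ[ℝ]) (h : ‖p‖ < ‖s‖) :
    (∀ B : ℍ[ℝ],
      HasSum (fun m : ℕ => s⁻¹ ^ (m + 1) * B * p ^ m)
        ((star s * B - B * p) * (p ^ 2 - (2 * s.re) • p + ((‖s‖ ^ 2 : ℝ) : ℍ[ℝ]))⁻¹)) ∧
    HasSum (fun m : ℕ => s⁻¹ ^ (m + 1) * p ^ m)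
      ((star s - p) * (p ^ 2 - (2 * s.re) • p + ((‖s‖ ^ 2 : ℝ) : ℍ[ℝ]))⁻¹) := by
  set Q := p ^ 2 - (2 * s.re) • p + ((‖s‖ ^ 2 : ℝ) : ℍ[ℝ])
  have hs : s ≠ 0 := norm_pos_iff.mp ((norm_nonneg p).trans_lt h)
  have hQ : Q ≠ 0 := Quaternion.sq_sub_two_re_smul_add_norm_sq_ne_zero h
  have hseries (B : ℍ[ℝ]) :
      HasSum (fun m : ℕ => s⁻¹ ^ (m + 1) * B * p ^ m) ((star s * B - B * p) * Q⁻¹) := by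
    obtain ⟨T, hT⟩ := summable_inv_pow_succ_mul_mul_pow h B
    rwa [← Quaternion.mul_sq_sub_two_re_smul_add_norm_sq_eq hs hT, mul_inv_cancel_right₀ hQ]
  exact ⟨hseries, by simpa using hseries 1⟩
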